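/- Let A_0, …, A_{l−1} be real m×m matrices with A_iᵀ = −A_i for all i, let ε > 0, and suppose ‖A_i‖ ≤ C for all i, where ‖·‖ is the ℓ2 operator norm. Then for every x ∈ ℝ^m, ‖x‖ ≤ ‖(I + ε A_{l−1})···(I + ε A_0)·x‖ ≤ (1 + ε²·C²)^{l/2}·‖x‖. In particular, the product of layer Jacobians neither decays nor grows exponentially in the depth l when ε² C² l is bounded. -/

import Mathlib

/-!
For a skew-adjoint `A` the vectors `x` and `A x` are orthogonal, so by Pythagoras
`‖(1 + ε A) x‖² = ‖x‖² + ε² ‖A x‖²`, which lies between `‖x‖²` and `(1 + ε² C²) ‖x‖²`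
when `‖A‖ ≤ C`. Each Euler step therefore never shrinks a vector and stretches it by at most
`√(1 + ε² C²)`; iterating over the `l` steps gives both bounds.
-/

open Matrix

noncomputable def l2OpNorm {m : Type*} [Fintype m] [DecidableEq m]
    (M : Matrix m m ℝ) : ℝ :=
  ‖Matrix.toEuclideanCLM (𝕜 := ℝ) M‖

open RealInnerProductSpace

section Seminormed

variable {R E : Type*} [Semiring R] [SeminormedAddCommGroup E] [Module R E]

theorem List.norm_le_norm_prod_apply {L : List (E →L[R] E)}
    (hL : ∀ S ∈ L, ∀ x, ‖x‖ ≤ ‖S x‖) (x : E) : ‖x‖ ≤ ‖L.prod x‖ := by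
  induction L with
  | nil => simp
  | cons S L ih =>
    rw [List.prod_cons, mul_apply_eq_comp]
    exact (ih fun S' hS' => hL S' (List.mem_cons_of_mem _ hS')).trans
      (hL S List.mem_cons_self _)

theorem List.norm_prod_apply_le {L : List (E →L[R] E)} {K : ℝ} (hK : 0 ≤ K)
    (hL : ∀ S ∈ L, ∀ x, ‖S x‖ ≤ K * ‖x‖) (x : E) : ‖L.prod x‖ ≤ K ^ L.length * ‖x‖ := by
  induction L with
  | nil => simp
  | cons S L ih =>
    rw [List.prod_cons, mul_apply_eq_comp, List.length_cons, pow_succ']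
    calc ‖S (L.prod x)‖ ≤ K * ‖L.prod x‖ := hL S List.mem_cons_self _
      _ ≤ K * (K ^ L.length * ‖x‖) :=
        mul_le_mul_of_nonneg_left (ih fun S' hS' => hL S' (List.mem_cons_of_mem _ hS')) hK
      _ = K * K ^ L.length * ‖x‖ := (mul_assoc _ _ _).symm

end Seminormed

namespace ContinuousLinearMap

variable {E : Type*} [NormedAddCommGroup E] [InnerProductSpace ℝ E] [CompleteSpace E]
  {T : E →L[ℝ] E}

theorem inner_apply_self_eq_zero_of_mem_skewAdjoint (hT : T ∈ skewAdjoint (E →L[ℝ] E))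
    (x : E) : ⟪T x, x⟫ = 0 := by
  have hadj : adjoint T = -T := by rw [← star_eq_adjoint, ← skewAdjoint.mem_iff.1 hT]
  have h : ⟪T x, x⟫ = -⟪T x, x⟫ :=
    calc ⟪T x, x⟫ = ⟪x, adjoint T x⟫ := (adjoint_inner_right T x x).symm
      _ = -⟪T x, x⟫ := by rw [hadj, _root_.neg_apply, inner_neg_right, real_inner_comm]
  linarith

theorem norm_one_add_smul_apply_sq (hT : T ∈ skewAdjoint (E →L[ℝ] E)) (ε : ℝ) (x : E) :
    ‖(1 + ε • T) x‖ ^ 2 = ‖x‖ ^ 2 + ε ^ 2 * ‖T x‖ ^ 2 := by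
  have horth : ⟪x, ε • T x⟫ = 0 := by
    rw [inner_smul_right, real_inner_comm, inner_apply_self_eq_zero_of_mem_skewAdjoint hT,
      mul_zero]
  show ‖x + ε • T x‖ ^ 2 = _
  rw [norm_add_sq_real, horth, mul_zero, add_zero, norm_smul, mul_pow, Real.norm_eq_abs, sq_abs]

theorem norm_le_norm_one_add_smul_apply (hT : T ∈ skewAdjoint (E →L[ℝ] E)) (ε : ℝ) (x : E) :
    ‖x‖ ≤ ‖(1 + ε • T) x‖ := by
  refine (sq_le_sq₀ (norm_nonneg _) (norm_nonneg _)).1 ?_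
  rw [norm_one_add_smul_apply_sq hT]
  have := mul_nonneg (sq_nonneg ε) (sq_nonneg ‖T x‖)
  linarith

theorem norm_one_add_smul_apply_le (hT : T ∈ skewAdjoint (E →L[ℝ] E)) {C : ℝ} (hC : ‖T‖ ≤ C)
    (ε : ℝ) (x : E) : ‖(1 + ε • T) x‖ ≤ √(1 + ε ^ 2 * C ^ 2) * ‖x‖ := by
  refine (sq_le_sq₀ (norm_nonneg _) (by positivity)).1 ?_
  have hTx : ‖T x‖ ^ 2 ≤ (C * ‖x‖) ^ 2 :=
    pow_le_pow_left₀ (norm_nonneg _) ((T.le_opNorm x).trans (by gcongr)) 2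
  rw [norm_one_add_smul_apply_sq hT, mul_pow, Real.sq_sqrt (by positivity)]
  nlinarith [mul_le_mul_of_nonneg_left hTx (sq_nonneg ε)]

end ContinuousLinearMap

theorem Matrix.toEuclideanCLM_mem_skewAdjoint {n : Type*} [Fintype n] [DecidableEq n]
    {A : Matrix n n ℝ} (hA : Aᵀ = -A) : toEuclideanCLM (𝕜 := ℝ) A ∈ skewAdjoint _ := by
  rw [skewAdjoint.mem_iff, ← map_star, star_eq_conjTranspose,
    conjTranspose_eq_transpose_of_trivial, hA, map_neg]

theorem euler_product_no_exponential_growth_or_decay_general (m l : ℕ) (ε C : ℝ)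
    (A : ℕ → Matrix (Fin m) (Fin m) ℝ)
    (hanti : ∀ i < l, (A i)ᵀ = -A i)
    (hC : ∀ i < l, l2OpNorm (A i) ≤ C)
    (x : EuclideanSpace ℝ (Fin m)) :
    ‖x‖ ≤ ‖Matrix.toEuclideanCLM (𝕜 := ℝ)
            (((List.range l).map fun i => (1 : Matrix (Fin m) (Fin m) ℝ)
                + ε • A (l - 1 - i)).prod) x‖ ∧
    ‖Matrix.toEuclideanCLM (𝕜 := ℝ)
        (((List.range l).map fun i => (1 : Matrix (Fin m) (Fin m) ℝ)
            + ε • A (l - 1 - i)).prod) x‖ ≤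
      Real.sqrt (1 + ε ^ 2 * C ^ 2) ^ l * ‖x‖ := by
  have hfactor : ∀ S ∈ ((List.range l).map fun i => (1 : Matrix (Fin m) (Fin m) ℝ)
      + ε • A (l - 1 - i)).map (toEuclideanCLM (𝕜 := ℝ)),
      ∃ i < l, S = 1 + ε • toEuclideanCLM (𝕜 := ℝ) (A i) := by
    simp only [List.map_map, List.mem_map, List.mem_range]
    rintro S ⟨i, hi, rfl⟩
    exact ⟨l - 1 - i, by omega, by simp⟩
  rw [map_list_prod]
  refine ⟨List.norm_le_norm_prod_apply (fun S hS => ?_) x,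
    (List.norm_prod_apply_le (Real.sqrt_nonneg (1 + ε ^ 2 * C ^ 2)) (fun S hS => ?_) x).trans_eq
      (by rw [List.length_map, List.length_map, List.length_range])⟩
  all_goals
    obtain ⟨i, hi, rfl⟩ := hfactor S hS
  · exact ContinuousLinearMap.norm_le_norm_one_add_smul_apply
      (toEuclideanCLM_mem_skewAdjoint (hanti i hi)) ε
  · exact ContinuousLinearMap.norm_one_add_smul_apply_le
      (toEuclideanCLM_mem_skewAdjoint (hanti i hi)) (hC i hi) ε

/-- **No exponential growth or decay of products of Euler steps.**
If each `A_i` is antisymmetric with `‖A_i‖ ≤ C`, then for every `x`,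
`‖x‖ ≤ ‖(I + ε A_{l-1}) ⋯ (I + ε A_0) x‖ ≤ (1 + ε² C²)^{l/2} ‖x‖`
(Euclidean norms; the factor of index `l-1` is leftmost). -/
theorem euler_product_no_exponential_growth_or_decay (m l : ℕ) (ε C : ℝ)
    (hε : 0 < ε) (A : ℕ → Matrix (Fin m) (Fin m) ℝ)
    (hanti : ∀ i < l, (A i)ᵀ = -A i)
    (hC : ∀ i < l, l2OpNorm (A i) ≤ C)
    (x : EuclideanSpace ℝ (Fin m)) :
    ‖x‖ ≤ ‖Matrix.toEuclideanCLM (𝕜 := ℝ)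
            (((List.range l).map fun i => (1 : Matrix (Fin m) (Fin m) ℝ)
                + ε • A (l - 1 - i)).prod) x‖ ∧
    ‖Matrix.toEuclideanCLM (𝕜 := ℝ)
        (((List.range l).map fun i => (1 : Matrix (Fin m) (Fin m) ℝ)
            + ε • A (l - 1 - i)).prod) x‖ ≤
      Real.sqrt (1 + ε ^ 2 * C ^ 2) ^ l * ‖x‖ :=
  euler_product_no_exponential_growth_or_decay_general m l ε C A hanti hC x
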